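/- arXiv:1809.02727 — 7 statements merged into one kernel-verified Lean document; each statement's English description precedes it below -/
import Mathlib

section
/- Let H be a real inner product space (e.g., ℝ^d) and let f : H → ℝ be a differentiable function that is convex and μ-smooth. Then for any step size 0 ≤ η ≤ 2/μ, the gradient update G_{f,η} is 1-expansive; that is, for all u, v ∈ H, ‖(u − η∇f(u)) − (v − η∇f(v))‖ ≤ ‖u − v‖. -/
open RealInnerProductSpace

private lemma descent_lemma
    {H : Type*} [NormedAddCommGroup H] [InnerProductSpace ℝ H] [CompleteSpace H]
    (f : H → ℝ) (f' : H → H) (μ : ℝ) (hμ : 0 < μ)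
    (hdiff : ∀ w, HasGradientAt f (f' w) w)
    (hsmooth : ∀ u v : H, ‖f' u - f' v‖ ≤ μ * ‖u - v‖)
    (u v : H) :
    f u ≤ f v + ⟪f' v, u - v⟫ + μ / 2 * ‖u - v‖ ^ 2 := by
  set d := u - v with hd
  set g : ℝ → ℝ := fun t => f (v + t • d) - t * ⟪f' v, d⟫ - μ / 2 * t ^ 2 * ‖d‖ ^ 2 with hg
  have hderiv : ∀ t : ℝ,
      HasDerivAt g (⟪f' (v + t • d), d⟫ - ⟪f' v, d⟫ - μ * t * ‖d‖ ^ 2) t := by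
    intro t
    have hline : HasDerivAt (fun t : ℝ => v + t • d) d t := by
      simpa using ((hasDerivAt_id t).smul_const d).const_add v
    have hcomp : HasDerivAt (fun t : ℝ => f (v + t • d)) ⟪f' (v + t • d), d⟫ t := by
      have := (hdiff (v + t • d)).hasFDerivAt.comp_hasDerivAt t hline
      simp [InnerProductSpace.toDual_apply_apply] at this
      exact this
    have h2 : HasDerivAt (fun t : ℝ => t * ⟪f' v, d⟫) ⟪f' v, d⟫ t := by
      simpa using (hasDerivAt_id t).mul_const (⟪f' v, d⟫ : ℝ)
    have h3 : HasDerivAt (fun t : ℝ => μ / 2 * t ^ 2 * ‖d‖ ^ 2) (μ * t * ‖d‖ ^ 2) t := by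
      have h := (((hasDerivAt_pow 2 t).const_mul (μ / 2)).mul_const (‖d‖ ^ 2))
      convert h using 1
      exacts [rfl, rfl, by ring]
    exact (hcomp.sub h2).sub h3
  have hanti : AntitoneOn g (Set.Icc (0 : ℝ) 1) := by
    apply antitoneOn_of_deriv_nonpos (convex_Icc 0 1)
    · exact fun t _ => (hderiv t).continuousAt.continuousWithinAt
    · exact fun t _ => (hderiv t).differentiableAt.differentiableWithinAt
    · intro t ht
      rw [interior_Icc] at ht
      rw [(hderiv t).deriv]
      have h1 : ⟪f' (v + t • d) - f' v, d⟫ ≤ ‖f' (v + t • d) - f' v‖ * ‖d‖ :=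
        real_inner_le_norm _ _
      have h2 : ‖f' (v + t • d) - f' v‖ ≤ μ * ‖t • d‖ := by
        simpa using hsmooth (v + t • d) v
      have h3 : ‖t • d‖ = t * ‖d‖ := by
        rw [norm_smul, Real.norm_eq_abs, abs_of_nonneg ht.1.le]
      have h4 : ⟪f' (v + t • d) - f' v, d⟫ = ⟪f' (v + t • d), d⟫ - ⟪f' v, d⟫ :=
        inner_sub_left _ _ _
      have h5 := mul_le_mul_of_nonneg_right h2 (norm_nonneg d)
      rw [h3] at h5
      have h6 : μ * (t * ‖d‖) * ‖d‖ = μ * t * ‖d‖ ^ 2 := by ring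
      linarith
  have h01 : g 1 ≤ g 0 := hanti (by norm_num) (by norm_num) (by norm_num)
  have hu : v + (1 : ℝ) • d = u := by simp [hd]
  simp only [hg, hu, zero_smul, one_pow, zero_pow, add_zero, mul_zero, zero_mul, sub_zero,
    one_mul, mul_one] at h01
  linarith

private lemma coco_key
    {H : Type*} [NormedAddCommGroup H] [InnerProductSpace ℝ H] [CompleteSpace H]
    (f : H → ℝ) (f' : H → H) (μ : ℝ) (hμ : 0 < μ)
    (hdiff : ∀ w, HasGradientAt f (f' w) w)
    (hconv : ∀ u v : H, f u ≥ f v + ⟪f' v, u - v⟫)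
    (hsmooth : ∀ u v : H, ‖f' u - f' v‖ ≤ μ * ‖u - v‖)
    (u v : H) :
    f u + ⟪f' u, v - u⟫ + 1 / (2 * μ) * ‖f' v - f' u‖ ^ 2 ≤ f v := by
  set G := f' v - f' u with hG
  set w := v - (1 / μ) • G with hw
  have hdes := descent_lemma f f' μ hμ hdiff hsmooth w v
  have hcv := hconv w u
  have hwv : w - v = -((1 / μ) • G) := by rw [hw]; abel
  have e1 : ⟪f' v, w - v⟫ = -(1 / μ) * ⟪f' v, G⟫ := by
    rw [hwv, inner_neg_right, real_inner_smul_right]; ring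
  have e2 : ‖w - v‖ ^ 2 = (1 / μ) ^ 2 * ‖G‖ ^ 2 := by
    rw [hwv, norm_neg, norm_smul, mul_pow, Real.norm_eq_abs, sq_abs]
  have e3 : ⟪f' u, w - u⟫ = ⟪f' u, v - u⟫ - (1 / μ) * ⟪f' u, G⟫ := by
    have : w - u = (v - u) - (1 / μ) • G := by rw [hw]; abel
    rw [this, inner_sub_right, real_inner_smul_right]
  have e4 : ⟪f' v, G⟫ - ⟪f' u, G⟫ = ‖G‖ ^ 2 := by
    rw [← inner_sub_left, ← hG, real_inner_self_eq_norm_sq]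
  have hμ' : μ ≠ 0 := ne_of_gt hμ
  rw [e1, e2] at hdes
  rw [e3] at hcv
  have : μ / 2 * ((1 / μ) ^ 2 * ‖G‖ ^ 2) = 1 / (2 * μ) * ‖G‖ ^ 2 := by
    field_simp
  have e5 : (1 / μ) * (⟪f' v, G⟫ - ⟪f' u, G⟫) = (1 / μ) * ‖G‖ ^ 2 := by rw [e4]
  have e5' : (1 / μ) * ⟪f' v, G⟫ - (1 / μ) * ⟪f' u, G⟫ = (1 / μ) * ‖G‖ ^ 2 := by
    rw [← e5]; ring
  have e6 : 1 / (2 * μ) * ‖G‖ ^ 2 + 1 / (2 * μ) * ‖G‖ ^ 2 = 1 / μ * ‖G‖ ^ 2 := by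
    field_simp; ring
  linarith [hdes, hcv, e5', this, e6]

/-- If `f` is convex and `μ`-smooth on a real inner product space,
then for any step size `0 ≤ η ≤ 2/μ` the gradient update `w ↦ w - η • ∇f w`
is `1`-expansive. -/
theorem gradient_update_one_expansive_of_convex_smooth
    {H : Type*} [NormedAddCommGroup H] [InnerProductSpace ℝ H] [CompleteSpace H]
    (f : H → ℝ) (f' : H → H) (μ η : ℝ) (hμ : 0 < μ)
    (hdiff : ∀ w, HasGradientAt f (f' w) w)
    (hconv : ∀ u v : H, f u ≥ f v + ⟪f' v, u - v⟫)
    (hsmooth : ∀ u v : H, ‖f' u - f' v‖ ≤ μ * ‖u - v‖)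
    (hη₀ : 0 ≤ η) (hη : η ≤ 2 / μ) :
    ∀ u v : H, ‖(u - η • f' u) - (v - η • f' v)‖ ≤ ‖u - v‖ := by
  intro u v
  set a := u - v with ha
  set G := f' u - f' v with hG
  have hcoco : ⟪G, a⟫ ≥ 1 / μ * ‖G‖ ^ 2 := by
    have h1 := coco_key f f' μ hμ hdiff hconv hsmooth u v
    have h2 := coco_key f f' μ hμ hdiff hconv hsmooth v u
    have e1 : ⟪f' u, v - u⟫ = -⟪f' u, a⟫ := by
      rw [ha, ← inner_neg_right]; congr 1; abel
    have e2 : ⟪f' v, u - v⟫ = ⟪f' v, a⟫ := by rw [ha]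
    have e3 : ‖f' v - f' u‖ = ‖G‖ := by rw [hG, ← norm_neg]; congr 1; abel
    have e3' : ‖f' u - f' v‖ = ‖G‖ := by rw [hG]
    have e4 : ⟪G, a⟫ = ⟪f' u, a⟫ - ⟪f' v, a⟫ := inner_sub_left _ _ _
    rw [e1, e3] at h1
    rw [e2, e3'] at h2
    have hμ' : (0:ℝ) < 2 * μ := by linarith
    rw [ge_iff_le, ← sub_nonneg]
    have : 1 / (2 * μ) * ‖G‖ ^ 2 + 1 / (2 * μ) * ‖G‖ ^ 2 = 1 / μ * ‖G‖ ^ 2 := by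
      field_simp; ring
    linarith [h1, h2]
  have hrw : (u - η • f' u) - (v - η • f' v) = a - η • G := by
    rw [ha, hG, smul_sub]; abel
  rw [hrw]
  have hsq : ‖a - η • G‖ ^ 2 ≤ ‖a‖ ^ 2 := by
    have hexp : ‖a - η • G‖ ^ 2 = ‖a‖ ^ 2 - 2 * (η * ⟪a, G⟫) + η ^ 2 * ‖G‖ ^ 2 := by
      rw [norm_sub_sq_real, real_inner_smul_right, norm_smul, mul_pow, Real.norm_eq_abs, sq_abs]
    rw [hexp]
    have hsymm : ⟪a, G⟫ = ⟪G, a⟫ := real_inner_comm _ _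
    have hG2 : 0 ≤ ‖G‖ ^ 2 := sq_nonneg _
    have hμη : η * μ ≤ 2 := (le_div_iff₀ hμ).mp hη
    have hcoco' : ‖G‖ ^ 2 ≤ μ * ⟪G, a⟫ := by
      rw [ge_iff_le, one_div_mul_eq_div, div_le_iff₀ hμ] at hcoco
      linarith [hcoco]
    have hinner : 0 ≤ ⟪G, a⟫ := by nlinarith [hcoco', hμ, hG2]
    have p1 : (η * η) * ‖G‖ ^ 2 ≤ (η * η) * (μ * ⟪G, a⟫) :=
      mul_le_mul_of_nonneg_left hcoco' (mul_nonneg hη₀ hη₀)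
    have p2 : η * ((η * μ) * ⟪G, a⟫) ≤ η * (2 * ⟪G, a⟫) :=
      mul_le_mul_of_nonneg_left (mul_le_mul_of_nonneg_right hμη hinner) hη₀
    rw [hsymm]
    nlinarith [p1, p2]
  have h1 : 0 ≤ ‖a - η • G‖ := norm_nonneg _
  have h2 : 0 ≤ ‖a‖ := norm_nonneg _
  nlinarith [hsq, h1, h2]
end

section
/- Let H be a real inner product space (e.g., ℝ^d) and let f : H → ℝ be a differentiable function that is γ-strongly convex and μ-smooth. Then for any step size 0 ≤ η ≤ 1/μ, the gradient update G_{f,η} is (1 − ηγ)-expansive; that is, for all u, v ∈ H, ‖(u − η∇f(u)) − (v − η∇f(v))‖ ≤ (1 − ηγ)‖u − v‖. -/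
open RealInnerProductSpace

lemma expand_norm_sub_smul {H : Type*} [NormedAddCommGroup H] [InnerProductSpace ℝ H]
    (a b : H) (c : ℝ) :
    ‖a - c • b‖ ^ 2 = ‖a‖ ^ 2 - 2 * c * ⟪a, b⟫ + c ^ 2 * ‖b‖ ^ 2 := by
  rw [@norm_sub_sq_real, real_inner_smul_right, norm_smul, Real.norm_eq_abs, mul_pow, sq_abs]
  ring

lemma bh_one_sided {H : Type*} [NormedAddCommGroup H] [InnerProductSpace ℝ H]
    (f : H → ℝ) (f' : H → H) (γ μ : ℝ)
    (hsc : ∀ u v : H, f u ≥ f v + ⟪f' v, u - v⟫ + γ / 2 * ‖u - v‖ ^ 2)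
    (hsmooth : ∀ u v : H, ‖f' u - f' v‖ ≤ μ * ‖u - v‖)
    (hlt : γ < μ) (u v : H) :
    f v - f u - ⟪f' u, v - u⟫ - γ / 2 * ‖v - u‖ ^ 2
      ≥ ‖f' v - f' u - γ • (v - u)‖ ^ 2 / (2 * (2 * (μ - γ))) := by
  set L : ℝ := 2 * (μ - γ) with hLdef
  have hL : 0 < L := by rw [hLdef]; linarith
  set c : ℝ := L⁻¹ with hcdef
  have hc : L * c = 1 := mul_inv_cancel₀ hL.ne'
  have hc0 : 0 < c := by positivity
  set e : H := f' v - f' u - γ • (v - u) with hedef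
  set w : H := v - c • e with hwdef
  -- expansions
  have hwu : w - u = (v - u) - c • e := by rw [hwdef]; abel
  have hwv : v - w = c • e := by rw [hwdef]; abel
  have exp1 : ‖w - u‖ ^ 2 = ‖v - u‖ ^ 2 - 2 * c * ⟪v - u, e⟫ + c ^ 2 * ‖e‖ ^ 2 := by
    rw [hwu, expand_norm_sub_smul]
  have exp2 : ‖v - w‖ ^ 2 = c ^ 2 * ‖e‖ ^ 2 := by
    rw [hwv, norm_smul, mul_pow, Real.norm_eq_abs, sq_abs]
  have exp3 : ⟪f' u, w - u⟫ = ⟪f' u, v - u⟫ - c * ⟪f' u, e⟫ := by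
    rw [hwu, inner_sub_right, real_inner_smul_right]
  have exp4 : ⟪f' w, v - w⟫ = c * ⟪f' v, e⟫ + c * ⟪f' w - f' v, e⟫ := by
    rw [hwv, real_inner_smul_right]
    rw [show (⟪f' w, e⟫ : ℝ) = ⟪f' v, e⟫ + ⟪f' w - f' v, e⟫ by
      rw [inner_sub_left]; ring]
    ring
  -- identity: ⟪f'v - f'u, e⟫ - γ⟪v-u, e⟫ = ‖e‖²
  have hid : ⟪f' v, e⟫ - ⟪f' u, e⟫ - γ * ⟪v - u, e⟫ = ‖e‖ ^ 2 := by
    have : (⟪e, e⟫ : ℝ) = ‖e‖ ^ 2 := real_inner_self_eq_norm_sq e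
    rw [hedef] at this ⊢
    rw [inner_sub_left, inner_sub_left, real_inner_smul_left] at this
    linarith [this]
  -- bound on cross term
  have hcross : ⟪f' w - f' v, e⟫ ≥ -(μ * c * ‖e‖ ^ 2) := by
    have h1 : ‖f' w - f' v‖ ≤ μ * (c * ‖e‖) := by
      have := hsmooth w v
      rwa [show w - v = -(c • e) by rw [hwdef]; abel, norm_neg, norm_smul,
        Real.norm_eq_abs, abs_of_pos hc0] at this
    have h2 := abs_real_inner_le_norm (f' w - f' v) e
    have h3 : |⟪f' w - f' v, e⟫| ≤ μ * c * ‖e‖ ^ 2 := by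
      calc |⟪f' w - f' v, e⟫| ≤ ‖f' w - f' v‖ * ‖e‖ := h2
        _ ≤ μ * (c * ‖e‖) * ‖e‖ := by
            apply mul_le_mul_of_nonneg_right h1 (norm_nonneg _)
        _ = μ * c * ‖e‖ ^ 2 := by ring
    linarith [neg_abs_le (⟪f' w - f' v, e⟫ : ℝ)]
  have A := hsc w u
  have B := hsc v w
  rw [exp1, exp3] at A
  rw [exp2, exp4] at B
  -- B : f v ≥ f w + (c*⟪f'v,e⟫ + c*⟪f'w-f'v,e⟫) + γ/2 * (c^2*‖e‖^2)
  have hcL : c ^ 2 * L = c := by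
    calc c ^ 2 * L = c * (L * c) := by ring
      _ = c := by rw [hc]; ring
  -- combine
  have key : f v - f u - ⟪f' u, v - u⟫ - γ / 2 * ‖v - u‖ ^ 2
      ≥ c * (⟪f' v, e⟫ - ⟪f' u, e⟫ - γ * ⟪v - u, e⟫) + c ^ 2 * (γ - μ) * ‖e‖ ^ 2 := by
    nlinarith [A, B, hcross, mul_pos hc0 hc0, sq_nonneg (‖e‖), hc0]
  rw [hid] at key
  have : c ^ 2 * (γ - μ) * ‖e‖ ^ 2 = -(c / 2) * ‖e‖ ^ 2 := by
    have : c ^ 2 * (γ - μ) = -(c/2) := by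
      have : γ - μ = -(L/2) := by rw [hLdef]; ring
      rw [this]
      calc c ^ 2 * -(L/2) = -(c^2 * L)/2 := by ring
        _ = -(c/2) := by rw [hcL]; ring
    rw [this]
  rw [this] at key
  have goal_eq : ‖e‖ ^ 2 / (2 * L) = c / 2 * ‖e‖ ^ 2 := by
    rw [hcdef, div_eq_mul_inv, mul_inv]; ring
  rw [hedef] at goal_eq ⊢
  linarith [key, goal_eq]

lemma bh_sym {H : Type*} [NormedAddCommGroup H] [InnerProductSpace ℝ H]
    (f : H → ℝ) (f' : H → H) (γ μ : ℝ)
    (hsc : ∀ u v : H, f u ≥ f v + ⟪f' v, u - v⟫ + γ / 2 * ‖u - v‖ ^ 2)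
    (hsmooth : ∀ u v : H, ‖f' u - f' v‖ ≤ μ * ‖u - v‖)
    (hlt : γ < μ) (u v : H) :
    ⟪f' u - f' v - γ • (u - v), u - v⟫
      ≥ ‖f' u - f' v - γ • (u - v)‖ ^ 2 / (2 * (μ - γ)) := by
  have h1 := bh_one_sided f f' γ μ hsc hsmooth hlt u v
  have h2 := bh_one_sided f f' γ μ hsc hsmooth hlt v u
  set E : H := f' u - f' v - γ • (u - v) with hEdef
  have hneg : f' v - f' u - γ • (v - u) = -E := by
    rw [hEdef, smul_sub, smul_sub]; abel
  rw [hneg, norm_neg] at h1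
  have hnrm : ‖v - u‖ = ‖u - v‖ := norm_sub_rev v u
  rw [hnrm] at h1
  have hinner1 : (⟪f' u, v - u⟫ : ℝ) = -⟪f' u, u - v⟫ := by
    rw [show v - u = -(u - v) by abel, inner_neg_right]
  rw [hinner1] at h1
  have hE : (⟪E, u - v⟫ : ℝ)
      = ⟪f' u, u - v⟫ - ⟪f' v, u - v⟫ - γ * ‖u - v‖ ^ 2 := by
    rw [hEdef, inner_sub_left, inner_sub_left, real_inner_smul_left,
      real_inner_self_eq_norm_sq]
  have hsum : (⟪E, u - v⟫ : ℝ) ≥ 2 * (‖E‖ ^ 2 / (2 * (2 * (μ - γ)))) := by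
    rw [hE]; linarith [h1, h2]
  have : 2 * (‖E‖ ^ 2 / (2 * (2 * (μ - γ)))) = ‖E‖ ^ 2 / (2 * (μ - γ)) := by
    have hL : (2 : ℝ) * (μ - γ) ≠ 0 := ne_of_gt (by linarith)
    field_simp
  rw [this] at hsum
  exact hsum

/-- If `f` is `γ`-strongly convex and `μ`-smooth on a real inner
product space, then for any step size `0 ≤ η ≤ 1/μ` the gradient update
`w ↦ w - η • ∇f w` is `(1 - ηγ)`-expansive. -/
theorem gradient_update_expansive_of_stronglyConvex_smooth
    {H : Type*} [NormedAddCommGroup H] [InnerProductSpace ℝ H] [CompleteSpace H]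
    (f : H → ℝ) (f' : H → H) (γ μ η : ℝ) (hγ : 0 < γ) (hμ : 0 < μ)
    (hdiff : ∀ w, HasGradientAt f (f' w) w)
    (hsc : ∀ u v : H, f u ≥ f v + ⟪f' v, u - v⟫ + γ / 2 * ‖u - v‖ ^ 2)
    (hsmooth : ∀ u v : H, ‖f' u - f' v‖ ≤ μ * ‖u - v‖)
    (hη₀ : 0 ≤ η) (hη : η ≤ 1 / μ) :
    ∀ u v : H, ‖(u - η • f' u) - (v - η • f' v)‖ ≤ (1 - η * γ) * ‖u - v‖ := by
  intro u v
  by_cases huv : u = v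
  · subst huv; simp
  -- basic facts
  have hd0 : u - v ≠ 0 := sub_ne_zero.mpr huv
  have hdpos : (0:ℝ) < ‖u - v‖ := norm_pos_iff.mpr hd0
  -- monotonicity: ⟪f'u - f'v, u - v⟫ ≥ γ ‖u-v‖²
  have hmono : (⟪f' u - f' v, u - v⟫ : ℝ) ≥ γ * ‖u - v‖ ^ 2 := by
    have h1 := hsc u v
    have h2 := hsc v u
    rw [show v - u = -(u - v) by abel, inner_neg_right, norm_neg] at h2
    rw [inner_sub_left]
    linarith
  -- γ ≤ μ
  have hγμ : γ ≤ μ := by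
    have h1 : (⟪f' u - f' v, u - v⟫ : ℝ) ≤ ‖f' u - f' v‖ * ‖u - v‖ :=
      real_inner_le_norm _ _
    have h2 : ‖f' u - f' v‖ * ‖u - v‖ ≤ μ * ‖u - v‖ * ‖u - v‖ :=
      mul_le_mul_of_nonneg_right (hsmooth u v) (norm_nonneg _)
    nlinarith [hmono, h1.trans h2, mul_pos hdpos hdpos]
  have hημ : η * μ ≤ 1 := by
    rw [le_div_iff₀ hμ] at hη; linarith
  have h1γ : 0 ≤ 1 - η * γ := by nlinarith [mul_le_mul_of_nonneg_left hγμ hη₀]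
  set E : H := f' u - f' v - γ • (u - v) with hEdef
  -- key inequality
  have keyineq : η ^ 2 * ‖E‖ ^ 2 ≤ 2 * η * (1 - η * γ) * ⟪E, u - v⟫ := by
    rcases lt_or_eq_of_le hγμ with hlt | heq
    · have hbh := bh_sym f f' γ μ hsc hsmooth hlt u v
      rw [← hEdef] at hbh
      have hEd : (0:ℝ) ≤ ⟪E, u - v⟫ := by
        have : (0:ℝ) ≤ ‖E‖ ^ 2 / (2 * (μ - γ)) := div_nonneg (sq_nonneg _) (by linarith)
        linarith
      -- η * (2*(μ-γ)) ≤ 2*(1 - η*γ)  ⟺  η*μ ≤ 1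
      have hcoef : η * (2 * (μ - γ)) ≤ 2 * (1 - η * γ) := by nlinarith
      have hLpos : (0:ℝ) < 2 * (μ - γ) := by linarith
      calc η ^ 2 * ‖E‖ ^ 2 = η * η * ‖E‖ ^ 2 := by ring
        _ ≤ η * (2 * (1 - η * γ) / (2 * (μ - γ))) * ‖E‖ ^ 2 := by
            apply mul_le_mul_of_nonneg_right _ (sq_nonneg _)
            apply mul_le_mul_of_nonneg_left _ hη₀
            rw [le_div_iff₀ hLpos]
            nlinarith
        _ = 2 * η * (1 - η * γ) * (‖E‖ ^ 2 / (2 * (μ - γ))) := by ring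
        _ ≤ 2 * η * (1 - η * γ) * ⟪E, u - v⟫ := by
            apply mul_le_mul_of_nonneg_left hbh
            positivity
    · -- γ = μ : show E = 0
      have hE0 : E = 0 := by
        have hnE : ‖E‖ ^ 2 ≤ 0 := by
          have hexp : ‖E‖ ^ 2 = ‖f' u - f' v‖ ^ 2 - 2 * γ * ⟪f' u - f' v, u - v⟫
              + γ ^ 2 * ‖u - v‖ ^ 2 := by
            rw [hEdef, expand_norm_sub_smul]
          have hg : ‖f' u - f' v‖ ^ 2 ≤ μ ^ 2 * ‖u - v‖ ^ 2 := by
            nlinarith [hsmooth u v, norm_nonneg (f' u - f' v), norm_nonneg (u - v)]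
          subst heq
          rw [hexp]
          nlinarith [hmono, hg, hγ, mul_pos hγ hdpos]
        have := sq_nonneg ‖E‖
        have : ‖E‖ = 0 := by nlinarith
        exact norm_eq_zero.mp this
      rw [hE0]
      simp
  -- final computation
  have hvec : (u - η • f' u) - (v - η • f' v) = (1 - η * γ) • (u - v) - η • E := by
    rw [hEdef]
    module
  rw [hvec]
  have hsq : ‖(1 - η * γ) • (u - v) - η • E‖ ^ 2 ≤ ((1 - η * γ) * ‖u - v‖) ^ 2 := by
    rw [expand_norm_sub_smul]
    have hin : (⟪(1 - η * γ) • (u - v), E⟫ : ℝ) = (1 - η * γ) * ⟪E, u - v⟫ := by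
      rw [real_inner_smul_left, real_inner_comm]
    rw [hin, norm_smul, Real.norm_eq_abs, abs_of_nonneg h1γ, mul_pow]
    nlinarith [keyineq]
  have hrhs : 0 ≤ (1 - η * γ) * ‖u - v‖ := by positivity
  nlinarith [norm_nonneg ((1 - η * γ) • (u - v) - η • E), hsq]
end

section
/- (Sensitivity of the Algorithm-2 global update across local iterations) Let f_1,…,f_N : H → ℝ be differentiable, convex, μ-smooth, L-Lipschitz functions on a real inner product space H, and let step sizes satisfy η_k ≤ 1/(2μ) for all k. Fix an initial local model v_{t−j} ∈ H and a global model g ∈ H. For k = t−j,…,t−1, let D(k) be either the empty set (no update) or a mini-batch of b indices, and evolve the local model by v_{k+1} = v_k − 2η_k · (1/b)·Σ_{i∈D(k)} ∇f_i(v_k) when D(k) is nonempty and v_{k+1} = v_k otherwise. Let D(t) be a mini-batch of b indices and define the noiseless global update u = (g + v_t)/2 − (η_t/b)·Σ_{i∈D(t)} ∇f_i(g). Let D'(t−j),…,D'(t) be a second batch sequence identical to D(t−j),…,D(t) except that exactly one sample in exactly one batch is replaced, and let u' be the corresponding output starting from the same v_{t−j} and g. Then ‖u − u'‖ ≤ max_{k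 ∈ {t−j,…,t}} 2η_k L/b. -/
open RealInnerProductSpace


section Aux
variable {H : Type*} [NormedAddCommGroup H] [InnerProductSpace ℝ H] [CompleteSpace H]

lemma descent_aux {f : H → ℝ} {f' : H → H} {μ : ℝ} (hμ : 0 < μ)
    (hdiff : ∀ w, HasGradientAt f (f' w) w)
    (hsmooth : ∀ u v : H, ‖f' u - f' v‖ ≤ μ * ‖u - v‖) (x y : H) :
    f y ≤ f x + ⟪f' x, y - x⟫ + μ * ‖y - x‖ ^ 2 := by
  have seg : Convex ℝ (segment ℝ x y) := convex_segment x y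
  have key := seg.norm_image_sub_le_of_norm_hasFDerivWithin_le'
    (f' := fun z => (InnerProductSpace.toDual ℝ H) (f' z))
    (φ := (InnerProductSpace.toDual ℝ H) (f' x)) (C := μ * ‖y - x‖)
    (fun z _ => ((hasGradientAt_iff_hasFDerivAt.1 (hdiff z)).hasFDerivWithinAt))
    ?_ (left_mem_segment ℝ x y) (right_mem_segment ℝ x y)
  · have key' : |f y - f x - ⟪f' x, y - x⟫| ≤ μ * ‖y - x‖ * ‖y - x‖ := by
      simpa [Real.norm_eq_abs, InnerProductSpace.toDual_apply_apply] using key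
    have h2 : f y - f x - ⟪f' x, y - x⟫ ≤ μ * ‖y - x‖ * ‖y - x‖ :=
      le_trans (le_abs_self _) key'
    nlinarith [h2]
  · intro z hz
    obtain ⟨a, c, ha, hc, hac, rfl⟩ := hz
    have h1 : (a • x + c • y) - x = c • (y - x) := by
      have haeq : a = 1 - c := by linarith
      rw [haeq]; module
    have h3 : ‖(a • x + c • y) - x‖ ≤ ‖y - x‖ := by
      rw [h1, norm_smul, Real.norm_eq_abs, abs_of_nonneg hc]
      nlinarith [norm_nonneg (y - x)]
    calc ‖(InnerProductSpace.toDual ℝ H) (f' (a • x + c • y))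
          - (InnerProductSpace.toDual ℝ H) (f' x)‖
        = ‖f' (a • x + c • y) - f' x‖ := by
          rw [← map_sub]; exact (InnerProductSpace.toDual ℝ H).norm_map _
      _ ≤ μ * ‖(a • x + c • y) - x‖ := hsmooth _ _
      _ ≤ μ * ‖y - x‖ := by nlinarith

lemma coco_aux {f : H → ℝ} {f' : H → H} {μ : ℝ} (hμ : 0 < μ)
    (hdiff : ∀ w, HasGradientAt f (f' w) w)
    (hconv : ∀ u v : H, f u ≥ f v + ⟪f' v, u - v⟫)
    (hsmooth : ∀ u v : H, ‖f' u - f' v‖ ≤ μ * ‖u - v‖) (p q : H) :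
    (1 / (2 * μ)) * ‖f' p - f' q‖ ^ 2 ≤ ⟪f' p - f' q, p - q⟫ := by
  have breg : ∀ u v : H,
      (1 / (4 * μ)) * ‖f' u - f' v‖ ^ 2 ≤ f u - f v - ⟪f' v, u - v⟫ := by
    intro u v
    set Δ := f' u - f' v with hΔ
    set z := u - (1 / (2 * μ)) • Δ with hz
    have hd := descent_aux hμ hdiff hsmooth u z
    have hc := hconv z v
    have e1 : z - u = -((1 / (2 * μ)) • Δ) := by rw [hz]; abel
    have e2 : z - v = (u - v) - (1 / (2 * μ)) • Δ := by rw [hz]; abel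
    have i1 : ⟪f' u, z - u⟫ = -(1 / (2 * μ)) * ⟪f' u, Δ⟫ := by
      rw [e1, inner_neg_right, real_inner_smul_right]; ring
    have i2 : ⟪f' v, z - v⟫ = ⟪f' v, u - v⟫ - (1 / (2 * μ)) * ⟪f' v, Δ⟫ := by
      rw [e2, inner_sub_right, real_inner_smul_right]
    have n1 : ‖z - u‖ ^ 2 = (1 / (2 * μ))^2 * ‖Δ‖ ^ 2 := by
      rw [e1, norm_neg, norm_smul, Real.norm_eq_abs, mul_pow, sq_abs]
    have i3 : ⟪f' u, Δ⟫ - ⟪f' v, Δ⟫ = ‖Δ‖ ^ 2 := by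
      rw [← inner_sub_left, ← hΔ, real_inner_self_eq_norm_sq]
    rw [i1, n1] at hd
    rw [i2] at hc
    have hμ' : μ ≠ 0 := ne_of_gt hμ
    have hmul : (1 / (2 * μ)) * ⟪f' u, Δ⟫
        = (1 / (2 * μ)) * ⟪f' v, Δ⟫ + (1 / (2 * μ)) * ‖Δ‖ ^ 2 := by
      linear_combination (1 / (2 * μ)) * i3
    have key1 : μ * ((1 / (2 * μ)) ^ 2 * ‖Δ‖ ^ 2) = (1 / (4 * μ)) * ‖Δ‖ ^ 2 := by
      field_simp; ring
    have key2 : (1 / (2 * μ)) * ‖Δ‖ ^ 2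
        = (1 / (4 * μ)) * ‖Δ‖ ^ 2 + (1 / (4 * μ)) * ‖Δ‖ ^ 2 := by
      field_simp; ring
    linarith [hd, hc]
  have b1 := breg p q
  have b2 := breg q p
  have hrev : ‖f' q - f' p‖ = ‖f' p - f' q‖ := norm_sub_rev _ _
  rw [hrev] at b2
  have hsum : ⟪f' p - f' q, p - q⟫
      = (f p - f q - ⟪f' q, p - q⟫) + (f q - f p - ⟪f' p, q - p⟫) := by
    rw [inner_sub_left]
    have : ⟪f' p, q - p⟫ = -⟪f' p, p - q⟫ := by
      rw [← inner_neg_right]; congr 1; abel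
    rw [this]; ring
  have hμ' : μ ≠ 0 := ne_of_gt hμ
  rw [hsum]
  have : (1 / (4 * μ)) * ‖f' p - f' q‖ ^ 2 + (1 / (4 * μ)) * ‖f' p - f' q‖ ^ 2
      = (1 / (2 * μ)) * ‖f' p - f' q‖ ^ 2 := by field_simp; ring
  linarith [b1, b2]

end Aux

lemma step_nonexpansive_aux {H : Type*} [NormedAddCommGroup H] [InnerProductSpace ℝ H]
    [CompleteSpace H] {N b : ℕ} (hb : 0 < b)
    (f : Fin N → H → ℝ) (f' : Fin N → H → H) {μ : ℝ} (hμ : 0 < μ)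
    (hdiff : ∀ i w, HasGradientAt (f i) (f' i w) w)
    (hconv : ∀ i, ∀ u v : H, f i u ≥ f i v + ⟪f' i v, u - v⟫)
    (hsmooth : ∀ i, ∀ u v : H, ‖f' i u - f' i v‖ ≤ μ * ‖u - v‖)
    {e : ℝ} (he0 : 0 ≤ e) (he : e ≤ 1 / (2 * μ)) (B : Fin b → Fin N) (w w' : H) :
    ‖(w - (2 * e / b) • ∑ i, f' (B i) w) - (w' - (2 * e / b) • ∑ i, f' (B i) w')‖
      ≤ ‖w - w'‖ := by
  have hb' : (0 : ℝ) < b := by exact_mod_cast hb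
  set s : ℝ := 2 * e / b with hs
  have hs0 : 0 ≤ s := by positivity
  have he' : 2 * μ * e ≤ 1 := by
    have h := mul_le_mul_of_nonneg_left he (by positivity : (0:ℝ) ≤ 2 * μ)
    have h2 : 2 * μ * (1 / (2 * μ)) = 1 := by field_simp
    linarith [h, h2.le, h2.ge]
  have hs1 : s * (μ * b) ≤ 1 := by
    rw [hs, div_mul_eq_mul_div, div_le_one hb']
    nlinarith [hb', he']
  set Δ : H := ∑ i, (f' (B i) w - f' (B i) w') with hΔ
  have hsum : (∑ i, f' (B i) w) - ∑ i, f' (B i) w' = Δ := (Finset.sum_sub_distrib _ _).symm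
  have hX : (w - s • ∑ i, f' (B i) w) - (w' - s • ∑ i, f' (B i) w')
      = (w - w') - s • Δ := by rw [← hsum, smul_sub]; abel
  have hcoco : (1 / (2 * μ)) * ((1 / b) * ‖Δ‖ ^ 2) ≤ ⟪Δ, w - w'⟫ := by
    have h1 : ∀ i : Fin b, (1 / (2 * μ)) * ‖f' (B i) w - f' (B i) w'‖ ^ 2
        ≤ ⟪f' (B i) w - f' (B i) w', w - w'⟫ := fun i =>
      coco_aux hμ (fun z => hdiff (B i) z) (hconv (B i)) (hsmooth (B i)) w w'
    have h2 : ⟪Δ, w - w'⟫ = ∑ i, ⟪f' (B i) w - f' (B i) w', w - w'⟫ := by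
      rw [hΔ, sum_inner]
    have h3 : ∑ i, (1 / (2 * μ)) * ‖f' (B i) w - f' (B i) w'‖ ^ 2 ≤ ⟪Δ, w - w'⟫ := by
      rw [h2]; exact Finset.sum_le_sum fun i _ => h1 i
    have h4 : ‖Δ‖ ^ 2 ≤ (b : ℝ) * ∑ i, ‖f' (B i) w - f' (B i) w'‖ ^ 2 := by
      have h5 : ‖Δ‖ ≤ ∑ i, ‖f' (B i) w - f' (B i) w'‖ := norm_sum_le _ _
      have h6 : (∑ i, ‖f' (B i) w - f' (B i) w'‖) ^ 2
          ≤ (b : ℝ) * ∑ i, ‖f' (B i) w - f' (B i) w'‖ ^ 2 := by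
        have := sq_sum_le_card_mul_sum_sq
          (s := (Finset.univ : Finset (Fin b)))
          (f := fun i => ‖f' (B i) w - f' (B i) w'‖)
        simpa using this
      calc ‖Δ‖ ^ 2 ≤ (∑ i, ‖f' (B i) w - f' (B i) w'‖) ^ 2 := by
            apply pow_le_pow_left₀ (norm_nonneg _) h5
        _ ≤ _ := h6
    have h7 : ∑ i, (1 / (2 * μ)) * ‖f' (B i) w - f' (B i) w'‖ ^ 2
        = (1 / (2 * μ)) * ∑ i, ‖f' (B i) w - f' (B i) w'‖ ^ 2 := by
      rw [Finset.mul_sum]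
    have hμ2 : 0 < 1 / (2 * μ) := by positivity
    have h8 : (1 / b) * ‖Δ‖ ^ 2 ≤ ∑ i, ‖f' (B i) w - f' (B i) w'‖ ^ 2 := by
      rw [div_mul_eq_mul_div, one_mul, div_le_iff₀ hb'] at *
      nlinarith [h4]
    calc (1 / (2 * μ)) * ((1 / b) * ‖Δ‖ ^ 2)
        ≤ (1 / (2 * μ)) * ∑ i, ‖f' (B i) w - f' (B i) w'‖ ^ 2 :=
          mul_le_mul_of_nonneg_left h8 hμ2.le
      _ = _ := h7.symm
      _ ≤ _ := h3
  rw [hX]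
  have hsq : ‖(w - w') - s • Δ‖ ^ 2 ≤ ‖w - w'‖ ^ 2 := by
    rw [norm_sub_sq_real, real_inner_smul_right, norm_smul, Real.norm_eq_abs,
      abs_of_nonneg hs0, mul_pow]
    have hic : ⟪w - w', Δ⟫ = ⟪Δ, w - w'⟫ := real_inner_comm _ _
    rw [hic]
    have hcoco' : ‖Δ‖ ^ 2 ≤ 2 * μ * b * ⟪Δ, w - w'⟫ := by
      have h := mul_le_mul_of_nonneg_left hcoco (by positivity : (0:ℝ) ≤ 2 * μ * b)
      have hEQ : 2 * μ * (b:ℝ) * ((1 / (2 * μ)) * ((1 / b) * ‖Δ‖ ^ 2)) = ‖Δ‖ ^ 2 := by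
        field_simp
      linarith [h, hEQ.le, hEQ.ge]
    have hI : 0 ≤ ⟪Δ, w - w'⟫ := by
      nlinarith [hcoco', sq_nonneg ‖Δ‖, mul_pos hμ hb']
    nlinarith [mul_le_mul_of_nonneg_left hcoco' (sq_nonneg s),
      mul_nonneg (sub_nonneg.2 hs1) (mul_nonneg hs0 hI), hs0, hI]
  exact (pow_le_pow_iff_left₀ (norm_nonneg _) (norm_nonneg _) two_ne_zero).1 hsq


/-- Sensitivity of the Algorithm-2 global update across local
iterations.  A node evolves its local model by mini-batch SGD steps of size
`2η_k` (a batch `Dloc k = none` means no update at that local step), and then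
performs the noiseless global update
`u = (g + v_last)/2 - (η_last/b) ∑_{i ∈ Dt} ∇f_i(g)`.
If the losses are convex, `μ`-smooth and `L`-Lipschitz, the step sizes satisfy
`η_k ≤ 1/(2μ)`, and the two batch sequences differ at exactly one sample of
exactly one batch, then `‖u - u'‖ ≤ max_k 2 η_k L / b`. -/
theorem algorithm2_global_update_sensitivity
    {H : Type*} [NormedAddCommGroup H] [InnerProductSpace ℝ H] [CompleteSpace H]
    {N b J : ℕ} (hb : 0 < b)
    (f : Fin N → H → ℝ) (f' : Fin N → H → H) (L μ : ℝ) (hμ : 0 < μ)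
    (hdiff : ∀ i w, HasGradientAt (f i) (f' i w) w)
    (hconv : ∀ i, ∀ u v : H, f i u ≥ f i v + ⟪f' i v, u - v⟫)
    (hsmooth : ∀ i, ∀ u v : H, ‖f' i u - f' i v‖ ≤ μ * ‖u - v‖)
    (hlip : ∀ i, ∀ w : H, ‖f' i w‖ ≤ L)
    (η : Fin (J + 1) → ℝ) (hη0 : ∀ k, 0 ≤ η k) (hη : ∀ k, η k ≤ 1 / (2 * μ))
    (Dloc Dloc' : Fin J → Option (Fin b → Fin N))
    (Dt Dt' : Fin b → Fin N)
    -- the two batch sequences differ at exactly one sample of exactly one batch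
    (hneighbor :
      (∃ k0 : Fin J, (∀ k, k ≠ k0 → Dloc k = Dloc' k) ∧ Dt = Dt' ∧
        ∃ (Bk Bk' : Fin b → Fin N) (i0 : Fin b), Dloc k0 = some Bk ∧
          Dloc' k0 = some Bk' ∧ Bk i0 ≠ Bk' i0 ∧ ∀ i, i ≠ i0 → Bk i = Bk' i)
      ∨ ((∀ k, Dloc k = Dloc' k) ∧
          ∃ i0 : Fin b, Dt i0 ≠ Dt' i0 ∧ ∀ i, i ≠ i0 → Dt i = Dt' i))
    (v v' : Fin (J + 1) → H) (hv0 : v 0 = v' 0)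
    (hv : ∀ k : Fin J, v k.succ = (Dloc k).elim (v k.castSucc)
      (fun Bk => v k.castSucc - (2 * η k.castSucc / b) • ∑ i, f' (Bk i) (v k.castSucc)))
    (hv' : ∀ k : Fin J, v' k.succ = (Dloc' k).elim (v' k.castSucc)
      (fun Bk => v' k.castSucc - (2 * η k.castSucc / b) • ∑ i, f' (Bk i) (v' k.castSucc)))
    (g : H) (u u' : H)
    (hu : u = (1 / 2 : ℝ) • (g + v (Fin.last J)) - (η (Fin.last J) / b) • ∑ i, f' (Dt i) g)
    (hu' : u' = (1 / 2 : ℝ) • (g + v' (Fin.last J))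
      - (η (Fin.last J) / b) • ∑ i, f' (Dt' i) g) :
    ‖u - u'‖ ≤ Finset.univ.sup' Finset.univ_nonempty
      (fun k : Fin (J + 1) => 2 * η k * L / b) := by
  
  have hb' : (0 : ℝ) < b := by exact_mod_cast hb
  have hL : 0 ≤ L := le_trans (norm_nonneg _) (hlip (Dt ⟨0, hb⟩) 0)
  have hsup : ∀ k : Fin (J + 1), 2 * η k * L / b ≤ Finset.univ.sup' Finset.univ_nonempty
      (fun k : Fin (J + 1) => 2 * η k * L / b) :=
    fun k => Finset.le_sup' (fun k : Fin (J + 1) => 2 * η k * L / b) (Finset.mem_univ k)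
  rcases hneighbor with ⟨k0, hk, hDt, Bk, Bk', i0, hB, hB', _, hagree⟩ | ⟨hloc, i0, _, hagree⟩
  · -- the local batches differ at step k0
    have hη0k : 0 ≤ η k0.castSucc := hη0 _
    set C : ℝ := 4 * η k0.castSucc * L / b with hC
    have key : ∀ m : ℕ, ∀ hm : m < J + 1,
        ‖v ⟨m, hm⟩ - v' ⟨m, hm⟩‖ ≤ if m ≤ (k0 : ℕ) then 0 else C := by
      intro m
      induction m with
      | zero =>
        intro hm
        rw [if_pos (Nat.zero_le _)]
        have h0 : v ⟨0, hm⟩ = v' ⟨0, hm⟩ := hv0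
        rw [h0, sub_self, norm_zero]
      | succ n ih =>
        intro hm
        have hnJ : n < J := Nat.lt_of_succ_lt_succ hm
        set k : Fin J := ⟨n, hnJ⟩ with hkdef
        have ihn : ‖v k.castSucc - v' k.castSucc‖ ≤ if n ≤ (k0 : ℕ) then 0 else C :=
          ih (Nat.lt_succ_of_lt hnJ)
        have goalshow : v ⟨n + 1, hm⟩ = v k.succ := rfl
        have goalshow' : v' ⟨n + 1, hm⟩ = v' k.succ := rfl
        rw [goalshow, goalshow']
        rcases Nat.lt_trichotomy n (k0 : ℕ) with hlt | heq | hgt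
        · -- before the differing step: the two trajectories coincide
          rw [if_pos (Nat.le_of_lt hlt)] at ihn
          have hveq : v k.castSucc = v' k.castSucc := by
            have := norm_le_zero_iff.1 ihn
            rwa [sub_eq_zero] at this
          have hkne : k ≠ k0 := by
            intro h
            rw [hkdef] at h
            have : n = (k0 : ℕ) := by rw [← h]
            omega
          have heqnext : v k.succ = v' k.succ := by
            rw [hv k, hv' k, ← hk k hkne, hveq]
          rw [if_pos (by omega : n + 1 ≤ (k0 : ℕ)), heqnext, sub_self, norm_zero]
        · -- the differing step
          rw [if_pos (le_of_eq heq)] at ihn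
          have hveq : v k.castSucc = v' k.castSucc := by
            have := norm_le_zero_iff.1 ihn
            rwa [sub_eq_zero] at this
          have hkk0 : k = k0 := Fin.ext heq
          rw [if_neg (by omega : ¬ n + 1 ≤ (k0 : ℕ))]
          rw [hkk0] at hveq ⊢
          rw [hv k0, hv' k0, hB, hB']
          simp only [Option.elim]
          rw [← hveq]
          set w := v k0.castSucc with hw
          have hsd : (∑ i, f' (Bk i) w) - ∑ i, f' (Bk' i) w
              = f' (Bk i0) w - f' (Bk' i0) w := by
            rw [← Finset.sum_sub_distrib]
            refine Finset.sum_eq_single i0 (fun i _ hi => by rw [hagree i hi, sub_self])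
              (fun h => absurd (Finset.mem_univ i0) h)
          have hrw : (w - (2 * η k0.castSucc / b) • ∑ i, f' (Bk i) w)
              - (w - (2 * η k0.castSucc / b) • ∑ i, f' (Bk' i) w)
              = -((2 * η k0.castSucc / b) • (f' (Bk i0) w - f' (Bk' i0) w)) := by
            rw [← hsd, smul_sub]; abel
          rw [hrw, norm_neg, norm_smul, Real.norm_eq_abs, abs_of_nonneg (by positivity)]
          have hbound : ‖f' (Bk i0) w - f' (Bk' i0) w‖ ≤ 2 * L :=
            le_trans (norm_sub_le _ _) (by linarith [hlip (Bk i0) w, hlip (Bk' i0) w])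
          calc (2 * η k0.castSucc / b) * ‖f' (Bk i0) w - f' (Bk' i0) w‖
              ≤ (2 * η k0.castSucc / b) * (2 * L) :=
                mul_le_mul_of_nonneg_left hbound (by positivity)
            _ = C := by rw [hC]; ring
        · -- after the differing step: nonexpansiveness
          have hkne : k ≠ k0 := by
            intro h
            rw [hkdef] at h
            have : n = (k0 : ℕ) := by rw [← h]
            omega
          rw [if_neg (by omega : ¬ n ≤ (k0 : ℕ))] at ihn
          rw [if_neg (by omega : ¬ n + 1 ≤ (k0 : ℕ))]
          have hD := hk k hkne
          rcases hDk : Dloc k with _ | B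
          · rw [hv k, hv' k, ← hD, hDk]
            simpa only [Option.elim] using ihn
          · rw [hv k, hv' k, ← hD, hDk]
            simp only [Option.elim]
            exact le_trans (step_nonexpansive_aux hb f f' hμ hdiff hconv hsmooth
              (hη0 k.castSucc) (hη k.castSucc) B _ _) ihn
    have hlast : ‖v (Fin.last J) - v' (Fin.last J)‖ ≤ C := by
      have h := key J (Nat.lt_succ_self J)
      rw [if_neg (by have := k0.isLt; omega : ¬ J ≤ (k0 : ℕ))] at h
      exact h
    have hulast : u - u' = (1 / 2 : ℝ) • (v (Fin.last J) - v' (Fin.last J)) := by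
      rw [hu, hu', hDt]; module
    calc ‖u - u'‖ = |1 / 2| * ‖v (Fin.last J) - v' (Fin.last J)‖ := by
          rw [hulast, norm_smul, Real.norm_eq_abs]
      _ ≤ (1 / 2) * C := by
          rw [abs_of_nonneg (by norm_num : (0:ℝ) ≤ 1/2)]
          exact mul_le_mul_of_nonneg_left hlast (by norm_num)
      _ = 2 * η k0.castSucc * L / b := by rw [hC]; ring
      _ ≤ _ := hsup k0.castSucc
  · -- only the final batch differs
    have hvv : ∀ m : ℕ, ∀ hm : m < J + 1, v ⟨m, hm⟩ = v' ⟨m, hm⟩ := by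
      intro m
      induction m with
      | zero => intro hm; exact hv0
      | succ n ih =>
        intro hm
        have hnJ : n < J := Nat.lt_of_succ_lt_succ hm
        set k : Fin J := ⟨n, hnJ⟩ with hkdef
        have hcc : v k.castSucc = v' k.castSucc := ih (Nat.lt_succ_of_lt hnJ)
        show v k.succ = v' k.succ
        rw [hv k, hv' k, ← hloc k, hcc]
    have hvl : v (Fin.last J) = v' (Fin.last J) := hvv J (Nat.lt_succ_self J)
    have hsd : (∑ i, f' (Dt i) g) - ∑ i, f' (Dt' i) g = f' (Dt i0) g - f' (Dt' i0) g := by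
      rw [← Finset.sum_sub_distrib]
      refine Finset.sum_eq_single i0 (fun i _ hi => by rw [hagree i hi, sub_self])
        (fun h => absurd (Finset.mem_univ i0) h)
    have huu : u - u' = -((η (Fin.last J) / b)
        • ((∑ i, f' (Dt i) g) - ∑ i, f' (Dt' i) g)) := by
      rw [hu, hu', hvl]; module
    rw [huu, hsd, norm_neg, norm_smul, Real.norm_eq_abs,
      abs_of_nonneg (div_nonneg (hη0 _) hb'.le)]
    have hbound : ‖f' (Dt i0) g - f' (Dt' i0) g‖ ≤ 2 * L :=
      le_trans (norm_sub_le _ _) (by linarith [hlip (Dt i0) g, hlip (Dt' i0) g])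
    calc (η (Fin.last J) / b) * ‖f' (Dt i0) g - f' (Dt' i0) g‖
        ≤ (η (Fin.last J) / b) * (2 * L) :=
          mul_le_mul_of_nonneg_left hbound (div_nonneg (hη0 _) hb'.le)
      _ = 2 * η (Fin.last J) * L / b := by ring
      _ ≤ _ := hsup (Fin.last J)
end

section
/- (Without-replacement sampling identity) Let n, b, t be positive integers with tb + b ≤ n, let α be a uniformly random permutation of {1,…,n}, and let s = (s_1,…,s_n) be a random vector in ℝ^n that is a (measurable) function of (α(1),…,α(tb)) only. Writing s_{a:c} = (1/(c+1−a))·Σ_{i=a}^{c} s_{α(i)}, we have E[(1/n)·Σ_{i=1}^n s_i − (1/b)·Σ_{j=1}^{b} s_{α(tb+j)}] = (tb/n)·E[s_{1:tb} − s_{tb+1:n}]. -/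
/-- Without-replacement sampling identity, Meng et al..
`α` is a uniformly random permutation of the `n` indices (expectations are
averages over all `n!` permutations), and the vector `s` may depend on the
permutation only through its first `t·b` values.  Then the expected gap between
the full average of `s` and the average of `s` over the mini-batch occupying
positions `t·b + 1, …, t·b + b` equals `(t·b/n)` times the expected gap between
the prefix average `s_{1:tb}` and the suffix average `s_{tb+1:n}`. -/
theorem without_replacement_sampling_identity
    (n b t : ℕ) (hb : 0 < b) (ht : 0 < t) (h : t * b + b ≤ n)
    (s : Equiv.Perm (Fin n) → Fin n → ℝ)
    (hdep : ∀ α α' : Equiv.Perm (Fin n),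
      (∀ i : Fin n, (i : ℕ) < t * b → α i = α' i) → s α = s α') :
    (∑ α : Equiv.Perm (Fin n),
        ((1 / (n : ℝ)) * ∑ i, s α i
          - (1 / (b : ℝ)) * ∑ j : Fin b, s α (α ⟨t * b + j.1, by have := j.2; omega⟩)))
      / (Nat.factorial n : ℝ)
    = ((t * b : ℕ) : ℝ) / n *
      ((∑ α : Equiv.Perm (Fin n),
          ((1 / ((t * b : ℕ) : ℝ)) * ∑ i : Fin (t * b), s α (α ⟨i.1, by have := i.2; omega⟩)
            - (1 / ((n - t * b : ℕ) : ℝ))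
              * ∑ i : Fin (n - t * b), s α (α ⟨t * b + i.1, by have := i.2; omega⟩)))
        / (Nat.factorial n : ℝ)) := by
  have hm : 0 < t * b := Nat.mul_pos ht hb
  have hmn : t * b < n := by omega
  have hbn : 0 < n := by omega
  set p : Fin n := ⟨t * b, hmn⟩ with hp
  -- symmetry lemma
  have key : ∀ k : Fin n, t * b ≤ (k : ℕ) →
      ∑ α : Equiv.Perm (Fin n), s α (α k) = ∑ α : Equiv.Perm (Fin n), s α (α p) := by
    intro k hk
    refine Fintype.sum_bijective (fun α => α * Equiv.swap p k)
      (Equiv.mulRight (Equiv.swap p k)).bijective _ _ fun α => ?_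
    have hs : s (α * Equiv.swap p k) = s α := by
      apply hdep
      intro i hi
      have h1 : i ≠ p := by
        simp only [ne_eq, Fin.ext_iff, hp]; omega
      have h2 : i ≠ k := by
        simp only [ne_eq, Fin.ext_iff]; omega
      simp [Equiv.Perm.mul_apply, Equiv.swap_apply_of_ne_of_ne h1 h2]
    rw [hs]
    simp [Equiv.Perm.mul_apply]
  set C : ℝ := ∑ α : Equiv.Perm (Fin n), s α (α p) with hC
  set T : ℝ := ∑ α : Equiv.Perm (Fin n), ∑ i, s α i with hT
  -- splitting lemma
  have hsplit : ∀ g : Fin n → ℝ,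
      (∑ i : Fin (t * b), g ⟨i.1, by have := i.2; omega⟩)
        + ∑ i : Fin (n - t * b), g ⟨t * b + i.1, by have := i.2; omega⟩
      = ∑ i, g i := by
    intro g
    have e : t * b + (n - t * b) = n := by omega
    have h0 : ∑ i : Fin n, g i = ∑ i : Fin (t * b + (n - t * b)), g (finCongr e i) :=
      (Fintype.sum_equiv (finCongr e) _ _ fun i => rfl).symm
    rw [h0, Fin.sum_univ_add]
    rfl
  -- batch sum
  have hB : ∑ α : Equiv.Perm (Fin n),
      ∑ j : Fin b, s α (α ⟨t * b + j.1, by have := j.2; omega⟩) = (b : ℝ) * C := by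
    rw [Finset.sum_comm]
    rw [Finset.sum_congr rfl fun (j : Fin b) _ => key ⟨t * b + j.1, by have := j.2; omega⟩ (by simp)]
    simp [mul_comm]
  -- suffix sum
  have hS : ∑ α : Equiv.Perm (Fin n),
      ∑ i : Fin (n - t * b), s α (α ⟨t * b + i.1, by have := i.2; omega⟩)
      = ((n - t * b : ℕ) : ℝ) * C := by
    rw [Finset.sum_comm]
    rw [Finset.sum_congr rfl fun (i : Fin (n - t * b)) _ =>
      key ⟨t * b + i.1, by have := i.2; omega⟩ (by simp)]
    simp [mul_comm]
  -- prefix sum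
  have hP : ∑ α : Equiv.Perm (Fin n),
      ∑ i : Fin (t * b), s α (α ⟨i.1, by have := i.2; omega⟩)
      = T - ((n - t * b : ℕ) : ℝ) * C := by
    have heach : ∀ α : Equiv.Perm (Fin n),
        ∑ i : Fin (t * b), s α (α ⟨i.1, by have := i.2; omega⟩)
          = (∑ i, s α i)
            - ∑ i : Fin (n - t * b), s α (α ⟨t * b + i.1, by have := i.2; omega⟩) := by
      intro α
      have h1 := hsplit (fun i => s α (α i))
      have h2 : ∑ i : Fin n, s α (α i) = ∑ i, s α i := Equiv.sum_comp α (s α)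
      linarith
    rw [Finset.sum_congr rfl fun α _ => heach α, Finset.sum_sub_distrib, hS, hT]
  have hn0 : (n : ℝ) ≠ 0 := Nat.cast_ne_zero.mpr (by omega)
  have hb0 : (b : ℝ) ≠ 0 := Nat.cast_ne_zero.mpr (by omega)
  have hm0 : ((t * b : ℕ) : ℝ) ≠ 0 := Nat.cast_ne_zero.mpr (by omega)
  have hnm0 : ((n - t * b : ℕ) : ℝ) ≠ 0 := Nat.cast_ne_zero.mpr (by omega)
  have hf0 : ((Nat.factorial n : ℕ) : ℝ) ≠ 0 := Nat.cast_ne_zero.mpr n.factorial_ne_zero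
  have hcast : ((n - t * b : ℕ) : ℝ) = (n : ℝ) - ((t * b : ℕ) : ℝ) :=
    Nat.cast_sub (le_of_lt hmn)
  rw [Finset.sum_sub_distrib, Finset.sum_sub_distrib, ← Finset.mul_sum, ← Finset.mul_sum,
    ← Finset.mul_sum, ← Finset.mul_sum, hB, hS, hP, ← hT]
  rw [hcast] at hnm0 ⊢
  push_cast at hnm0 hm0 ⊢
  have hnm0' : (n : ℝ) - (b : ℝ) * (t : ℝ) ≠ 0 := by intro h0; apply hnm0; linarith
  field_simp
  ring
end

section
/- Let n, b, T be positive integers with bT ≤ n. Then Σ_{t=1}^{T} [ (t−1)/b + (t−1)²/(n − (t−1)b) ] ≤ 3n²/(2b³) + (n²/b³)·log(n/(n − b(T−1))). -/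
private lemma log_step_aux (x y : ℝ) (hy : 0 < y) (hxy : y ≤ x) :
    (x - y) / x ≤ Real.log x - Real.log y := by
  have hx : 0 < x := lt_of_lt_of_le hy hxy
  have h := Real.log_le_sub_one_of_pos (show (0:ℝ) < y / x by positivity)
  rw [Real.log_div (ne_of_gt hy) (ne_of_gt hx)] at h
  have : (x - y) / x = 1 - y / x := by field_simp
  linarith [this]

/-- For positive integers `n, b, T` with `bT ≤ n`,
`∑_{t=1}^{T} [(t-1)/b + (t-1)²/(n-(t-1)b)] ≤ 3n²/(2b³) + (n²/b³)·log(n/(n-b(T-1)))`. -/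
theorem sum_prefix_ratio_bound (n b T : ℕ) (hn : 0 < n) (hb : 0 < b) (hT : 0 < T)
    (hbT : b * T ≤ n) :
    ∑ t ∈ Finset.Icc 1 T,
        (((t : ℝ) - 1) / b + ((t : ℝ) - 1) ^ 2 / ((n : ℝ) - ((t : ℝ) - 1) * b))
      ≤ 3 * (n : ℝ) ^ 2 / (2 * (b : ℝ) ^ 3)
        + (n : ℝ) ^ 2 / (b : ℝ) ^ 3
          * Real.log ((n : ℝ) / ((n : ℝ) - b * ((T : ℝ) - 1))) := by
  obtain ⟨T', rfl⟩ : ∃ T', T = T' + 1 := ⟨T - 1, (Nat.succ_pred_eq_of_pos hT).symm⟩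
  have hbR : (0:ℝ) < b := by exact_mod_cast hb
  have hnR : (0:ℝ) < n := by exact_mod_cast hn
  have hbT' : (b:ℝ) * (T' + 1) ≤ n := by exact_mod_cast hbT
  -- reindex : Icc 1 (T'+1) → range (T'+1)
  have hre : ∑ t ∈ Finset.Icc 1 (T' + 1),
        (((t : ℝ) - 1) / b + ((t : ℝ) - 1) ^ 2 / ((n : ℝ) - ((t : ℝ) - 1) * b))
      = ∑ s ∈ Finset.range (T' + 1),
        ((s : ℝ) / b + (s : ℝ) ^ 2 / ((n : ℝ) - (s : ℝ) * b)) := by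
    rw [← Finset.Ico_add_one_right_eq_Icc, Finset.sum_Ico_eq_sum_range]
    refine Finset.sum_congr rfl fun s _ => ?_
    push_cast
    ring_nf
  rw [hre, Finset.sum_add_distrib]
  -- denominators are at least b
  have hden : ∀ s : ℕ, s ≤ T' → (b:ℝ) ≤ (n:ℝ) - (s:ℝ) * b := by
    intro s hs
    have : (s:ℝ) * b ≤ (T':ℝ) * b := by
      have : (s:ℝ) ≤ T' := by exact_mod_cast hs
      nlinarith
    nlinarith
  have hsq : ∀ s : ℕ, s ≤ T' → (s:ℝ) ^ 2 ≤ (n:ℝ) ^ 2 / (b:ℝ) ^ 2 := by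
    intro s hs
    have hsT : (s:ℝ) ≤ T' := by exact_mod_cast hs
    have h1 : (s:ℝ) * b ≤ n := by nlinarith
    rw [le_div_iff₀ (by positivity)]
    nlinarith [mul_le_mul h1 h1 (by positivity) hnR.le]
  -- Part A : Gauss sum
  have hA : ∑ s ∈ Finset.range (T' + 1), (s : ℝ) / b ≤ (n:ℝ)^2 / (2 * (b:ℝ)^3) := by
    have hg : (∑ s ∈ Finset.range (T' + 1), (s : ℝ)) = (T' + 1) * T' / 2 := by
      have := Finset.sum_range_id_mul_two (T' + 1)
      have h2 : ((∑ i ∈ Finset.range (T' + 1), (i:ℕ) : ℕ) : ℝ) * 2 = ((T' + 1) * T' : ℕ) := by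
        exact_mod_cast congrArg (Nat.cast : ℕ → ℝ) this
      push_cast at h2
      push_cast
      linarith
    rw [← Finset.sum_div, hg]
    rw [div_le_div_iff₀ (by positivity) (by positivity)]
    have hT'b : (b:ℝ) * T' ≤ n := by nlinarith
    nlinarith [mul_le_mul hbT' hT'b (by positivity) hnR.le]
  -- Part B : split last term of the quadratic sum
  have hsplit : ∑ s ∈ Finset.range (T' + 1), (s : ℝ) ^ 2 / ((n : ℝ) - (s : ℝ) * b)
      = (∑ s ∈ Finset.range T', (s : ℝ) ^ 2 / ((n : ℝ) - (s : ℝ) * b))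
        + (T':ℝ) ^ 2 / ((n:ℝ) - (T':ℝ) * b) :=
    Finset.sum_range_succ _ T'
  -- last term
  have hC : (T':ℝ) ^ 2 / ((n:ℝ) - (T':ℝ) * b) ≤ (n:ℝ)^2 / (b:ℝ)^3 := by
    have h1 := hden T' le_rfl
    have h2 := hsq T' le_rfl
    calc (T':ℝ) ^ 2 / ((n:ℝ) - (T':ℝ) * b) ≤ ((n:ℝ)^2 / (b:ℝ)^2) / b := by
          gcongr <;> first | positivity | exact h1 | exact h2
      _ = (n:ℝ)^2 / (b:ℝ)^3 := by field_simp
  -- main telescoping sum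
  have hB : ∑ s ∈ Finset.range T', (s : ℝ) ^ 2 / ((n : ℝ) - (s : ℝ) * b)
      ≤ (n:ℝ)^2 / (b:ℝ)^3 * (Real.log n - Real.log ((n:ℝ) - (T':ℝ) * b)) := by
    have hptw : ∀ s ∈ Finset.range T',
        (s : ℝ) ^ 2 / ((n : ℝ) - (s : ℝ) * b)
          ≤ (n:ℝ)^2 / (b:ℝ)^3 *
            (Real.log ((n:ℝ) - (s:ℝ) * b) - Real.log ((n:ℝ) - ((s:ℕ) + 1 : ℕ) * b)) := by
      intro s hs
      rw [Finset.mem_range] at hs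
      have hs1 : s + 1 ≤ T' := hs
      have hApos : (b:ℝ) ≤ (n:ℝ) - (s:ℝ) * b := hden s (le_of_lt hs)
      have hCpos : (b:ℝ) ≤ (n:ℝ) - ((s:ℝ) + 1) * b := by
        have := hden (s + 1) hs1
        push_cast at this
        linarith
      have hxy : (n:ℝ) - ((s:ℝ) + 1) * b ≤ (n:ℝ) - (s:ℝ) * b := by nlinarith
      have hlog := log_step_aux ((n:ℝ) - (s:ℝ) * b) ((n:ℝ) - ((s:ℝ) + 1) * b)
        (lt_of_lt_of_le hbR hCpos) hxy
      have hdiff : ((n:ℝ) - (s:ℝ) * b) - ((n:ℝ) - ((s:ℝ) + 1) * b) = b := by ring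
      rw [hdiff] at hlog
      have hA0 : (0:ℝ) < (n:ℝ) - (s:ℝ) * b := lt_of_lt_of_le hbR hApos
      have hsqs := hsq s (le_of_lt hs)
      calc (s : ℝ) ^ 2 / ((n : ℝ) - (s : ℝ) * b)
          ≤ ((n:ℝ)^2 / (b:ℝ)^2) / ((n : ℝ) - (s : ℝ) * b) := by gcongr
        _ = (n:ℝ)^2 / (b:ℝ)^3 * ((b:ℝ) / ((n : ℝ) - (s : ℝ) * b)) := by
            field_simp
        _ ≤ (n:ℝ)^2 / (b:ℝ)^3 *
            (Real.log ((n:ℝ) - (s:ℝ) * b) - Real.log ((n:ℝ) - ((s:ℕ) + 1 : ℕ) * b)) := by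
            apply mul_le_mul_of_nonneg_left _ (by positivity)
            push_cast
            exact hlog
    calc ∑ s ∈ Finset.range T', (s : ℝ) ^ 2 / ((n : ℝ) - (s : ℝ) * b)
        ≤ ∑ s ∈ Finset.range T', (n:ℝ)^2 / (b:ℝ)^3 *
            (Real.log ((n:ℝ) - (s:ℝ) * b) - Real.log ((n:ℝ) - ((s:ℕ) + 1 : ℕ) * b)) :=
          Finset.sum_le_sum hptw
      _ = (n:ℝ)^2 / (b:ℝ)^3 * ∑ s ∈ Finset.range T',
            ((fun k : ℕ => Real.log ((n:ℝ) - (k:ℝ) * b)) s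
              - (fun k : ℕ => Real.log ((n:ℝ) - (k:ℝ) * b)) (s + 1)) := by
          rw [Finset.mul_sum]
      _ = (n:ℝ)^2 / (b:ℝ)^3 * (Real.log n - Real.log ((n:ℝ) - (T':ℝ) * b)) := by
          rw [Finset.sum_range_sub' (fun k : ℕ => Real.log ((n:ℝ) - (k:ℝ) * b)) T']
          norm_num
  -- combine
  have hTden : (0:ℝ) < (n:ℝ) - (T':ℝ) * b := lt_of_lt_of_le hbR (hden T' le_rfl)
  have hlogeq : Real.log ((n : ℝ) / ((n : ℝ) - (b:ℝ) * (((T' + 1 : ℕ) : ℝ) - 1)))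
      = Real.log n - Real.log ((n:ℝ) - (T':ℝ) * b) := by
    have : (n : ℝ) - (b:ℝ) * (((T' + 1 : ℕ) : ℝ) - 1) = (n:ℝ) - (T':ℝ) * b := by
      push_cast; ring
    rw [this, Real.log_div (ne_of_gt hnR) (ne_of_gt hTden)]
  rw [hlogeq]
  have key : 3 * (n : ℝ) ^ 2 / (2 * (b : ℝ) ^ 3)
      = (n:ℝ)^2 / (2 * (b:ℝ)^3) + (n:ℝ)^2 / (b:ℝ)^3 := by ring
  linarith [hA, hB, hC, hsplit]
end

section
/- Let n, b, T be positive integers with bT ≤ n. Then Σ_{t=1}^{T} [ (t−1)/(b·t) + (t−1)²/(t·(n − (t−1)b)) ] ≤ 2n/b² + (n/b²)·log(n/(n − b(T−1))). -/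
lemma aux_log (b x : ℝ) (hb : 0 < b) (hxb : 0 < x - b) :
    b / x ≤ Real.log x - Real.log (x - b) := by
  have hx : 0 < x := by linarith
  have h := Real.log_le_sub_one_of_pos (div_pos hxb hx)
  rw [Real.log_div hxb.ne' hx.ne'] at h
  have e : (x - b) / x - 1 = -(b / x) := by field_simp; ring
  rw [e] at h
  linarith

/-- For positive integers `n, b, T` with `bT ≤ n`,
`∑_{t=1}^{T} [(t-1)/(bt) + (t-1)²/(t(n-(t-1)b))] ≤ 2n/b² + (n/b²)·log(n/(n-b(T-1)))`. -/
theorem sum_prefix_ratio_bound' (n b T : ℕ) (hn : 0 < n) (hb : 0 < b) (hT : 0 < T)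
    (hbT : b * T ≤ n) :
    ∑ t ∈ Finset.Icc 1 T,
        (((t : ℝ) - 1) / ((b : ℝ) * t)
          + ((t : ℝ) - 1) ^ 2 / ((t : ℝ) * ((n : ℝ) - ((t : ℝ) - 1) * b)))
      ≤ 2 * (n : ℝ) / (b : ℝ) ^ 2
        + (n : ℝ) / (b : ℝ) ^ 2
          * Real.log ((n : ℝ) / ((n : ℝ) - b * ((T : ℝ) - 1))) := by
  obtain ⟨m, rfl⟩ : ∃ m, T = m + 1 := ⟨T - 1, (Nat.succ_pred_eq_of_pos hT).symm⟩
  have hb' : (0:ℝ) < b := by exact_mod_cast hb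
  have hn' : (0:ℝ) < n := by exact_mod_cast hn
  have hkey : ∀ i : ℕ, i ≤ m → (b:ℝ) ≤ (n:ℝ) - i * b := by
    intro i hi
    have h1 : b * (i+1) ≤ n := le_trans (Nat.mul_le_mul_left b (by omega)) hbT
    have h2 : ((b * (i+1) : ℕ) : ℝ) ≤ n := by exact_mod_cast h1
    push_cast at h2; nlinarith
  have hpos : ∀ i : ℕ, i ≤ m → (0:ℝ) < (n:ℝ) - i * b :=
    fun i hi => lt_of_lt_of_le hb' (hkey i hi)
  rw [← Finset.Ico_add_one_right_eq_Icc, Finset.sum_Ico_eq_sum_range]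
  have hrange : m + 1 + 1 - 1 = m + 1 := by omega
  rw [hrange]
  have step1 : ∀ i ∈ Finset.range (m+1),
      ((((1+i:ℕ):ℝ)) - 1) / ((b:ℝ) * ((1+i:ℕ):ℝ))
        + (((1+i:ℕ):ℝ) - 1)^2 / (((1+i:ℕ):ℝ) * ((n:ℝ) - (((1+i:ℕ):ℝ) - 1) * b))
      ≤ 1/(b:ℝ) + (i:ℝ)/((n:ℝ) - i*b) := by
    intro i hi
    simp only [Finset.mem_range] at hi
    have him : i ≤ m := by omega
    have hp := hpos i him
    push_cast
    have e1 : (1:ℝ) + (i:ℝ) - 1 = (i:ℝ) := by ring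
    rw [e1]
    have h1 : (i:ℝ) / ((b:ℝ) * (1+i)) ≤ 1/(b:ℝ) := by
      rw [div_le_div_iff₀ (by positivity) hb']
      nlinarith [Nat.cast_nonneg (α := ℝ) i]
    have h2 : (i:ℝ)^2 / ((1+(i:ℝ)) * ((n:ℝ) - i*b)) ≤ (i:ℝ)/((n:ℝ)-i*b) := by
      rw [div_le_div_iff₀ (by positivity) hp]
      nlinarith [Nat.cast_nonneg (α := ℝ) i]
    linarith
  have step2 : ∀ i ∈ Finset.range m,
      (i:ℝ)/((n:ℝ) - i*b)
        ≤ (n:ℝ)/(b:ℝ)^2 * (Real.log ((n:ℝ) - i*b) - Real.log ((n:ℝ) - (i+1:ℕ)*b)) := by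
    intro i hi
    simp only [Finset.mem_range] at hi
    have him : i ≤ m := by omega
    have hp := hpos i him
    have hp2 : (0:ℝ) < (n:ℝ) - (i+1:ℕ)*b := hpos (i+1) (by omega)
    have hxb : (0:ℝ) < ((n:ℝ) - i*b) - b := by push_cast at hp2 ⊢; linarith
    have hlog := aux_log (b:ℝ) ((n:ℝ) - i*b) hb' hxb
    have e : ((n:ℝ) - i*b) - b = (n:ℝ) - (i+1:ℕ)*b := by push_cast; ring
    rw [e] at hlog
    have hib : (i:ℝ)*b ≤ (n:ℝ) - b := by
      have := hkey i him; nlinarith [Nat.cast_nonneg (α := ℝ) i, hb']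
    calc (i:ℝ)/((n:ℝ) - i*b)
        ≤ (n:ℝ)/(b:ℝ)^2 * ((b:ℝ)/((n:ℝ) - i*b)) := by
          have e2 : (n:ℝ)/(b:ℝ)^2 * ((b:ℝ)/((n:ℝ) - i*b)) = (n:ℝ)/((b:ℝ)*((n:ℝ) - i*b)) := by
            field_simp
          rw [e2, div_le_div_iff₀ hp (by positivity)]
          nlinarith [Nat.cast_nonneg (α := ℝ) i]
      _ ≤ (n:ℝ)/(b:ℝ)^2 * (Real.log ((n:ℝ) - i*b) - Real.log ((n:ℝ) - (i+1:ℕ)*b)) := by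
          apply mul_le_mul_of_nonneg_left hlog (by positivity)
  have tele : ∑ i ∈ Finset.range m,
      (n:ℝ)/(b:ℝ)^2 * (Real.log ((n:ℝ) - i*b) - Real.log ((n:ℝ) - (i+1:ℕ)*b))
      = (n:ℝ)/(b:ℝ)^2 * (Real.log (n:ℝ) - Real.log ((n:ℝ) - m*b)) := by
    rw [← Finset.mul_sum, Finset.sum_range_sub' (fun i => Real.log ((n:ℝ) - (i:ℕ)*b))]
    norm_num
  have hposm := hpos m le_rfl
  have hlogdiv : Real.log ((n:ℝ)/((n:ℝ) - m*b)) = Real.log (n:ℝ) - Real.log ((n:ℝ) - m*b) :=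
    Real.log_div hn'.ne' hposm.ne'
  calc ∑ i ∈ Finset.range (m+1),
        (((((1+i:ℕ):ℝ)) - 1) / ((b:ℝ) * ((1+i:ℕ):ℝ))
          + (((1+i:ℕ):ℝ) - 1)^2 / (((1+i:ℕ):ℝ) * ((n:ℝ) - (((1+i:ℕ):ℝ) - 1) * b)))
      ≤ ∑ i ∈ Finset.range (m+1), (1/(b:ℝ) + (i:ℝ)/((n:ℝ) - i*b)) :=
        Finset.sum_le_sum step1
    _ = ((m:ℝ)+1)/b + (∑ i ∈ Finset.range m, (i:ℝ)/((n:ℝ) - i*b) + (m:ℝ)/((n:ℝ) - m*b)) := by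
        rw [Finset.sum_add_distrib, Finset.sum_const, Finset.sum_range_succ]
        simp [Finset.card_range]
        ring
    _ ≤ ((m:ℝ)+1)/b + ((n:ℝ)/(b:ℝ)^2 * (Real.log (n:ℝ) - Real.log ((n:ℝ) - m*b))
          + (m:ℝ)/((n:ℝ) - m*b)) := by
        gcongr ?_ + (?_ + ?_)
        · exact le_refl _
        · rw [← tele]; exact Finset.sum_le_sum step2
        · exact le_refl _
    _ ≤ 2 * (n : ℝ) / (b : ℝ) ^ 2
        + (n : ℝ) / (b : ℝ) ^ 2
          * Real.log ((n : ℝ) / ((n : ℝ) - b * (((m+1:ℕ) : ℝ) - 1))) := by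
        have e : (n:ℝ) - (b:ℝ) * (((m+1:ℕ):ℝ) - 1) = (n:ℝ) - m*b := by push_cast; ring
        rw [e, hlogdiv]
        have p1 : ((m:ℝ)+1)/b ≤ (n:ℝ)/(b:ℝ)^2 := by
          rw [div_le_div_iff₀ hb' (by positivity)]
          have h2 : ((b * (m+1) : ℕ) : ℝ) ≤ n := by exact_mod_cast hbT
          push_cast at h2
          nlinarith
        have p2 : (m:ℝ)/((n:ℝ) - m*b) ≤ (n:ℝ)/(b:ℝ)^2 := by
          rw [div_le_div_iff₀ hposm (by positivity)]
          have hk := hkey m le_rfl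
          nlinarith [Nat.cast_nonneg (α := ℝ) m, mul_le_mul_of_nonneg_left hk hn'.le]
        have e2 : 2*(n:ℝ)/(b:ℝ)^2 = (n:ℝ)/(b:ℝ)^2 + (n:ℝ)/(b:ℝ)^2 := by ring
        rw [e2]
        linarith [p1, p2]
end

section
/- (One-step noisy gradient inequality, strongly convex case) Let F : ℝ^d → ℝ be differentiable and γ-strongly convex (γ > 0) with minimizer w*, let w, g ∈ ℝ^d, let η > 0, and let N be an integrable mean-zero random vector in ℝ^d with E‖N‖² < ∞. Define the random point w' = w − ηg + N. Then F(w) − F(w*) ≤ (1/(2η) − γ/4)·‖w − w*‖² − (1/(2η))·E‖w' − w*‖² + (η + 1/γ)·‖∇F(w) − g‖² + η·‖∇F(w)‖² + (1/(2η))·E‖N‖². -/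
open RealInnerProductSpace MeasureTheory

/-- One-step noisy gradient inequality, strongly convex case.
For a differentiable `γ`-strongly convex `F` with minimizer `w*`, deterministic
point `w`, direction `g`, step size `η > 0`, and an integrable mean-zero noise
vector `N` with finite second moment, the random point `w' = w - η g + N`
satisfies the per-iteration inequality used in the convergence analysis of
differentially private SGD. -/
theorem one_step_noisy_gradient_stronglyConvex
    {d : ℕ} (F : EuclideanSpace ℝ (Fin d) → ℝ)
    (F' : EuclideanSpace ℝ (Fin d) → EuclideanSpace ℝ (Fin d))
    (γ : ℝ) (hγ : 0 < γ)
    (hdiff : ∀ x, HasGradientAt F (F' x) x)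
    (hsc : ∀ u v : EuclideanSpace ℝ (Fin d),
      F u ≥ F v + ⟪F' v, u - v⟫ + γ / 2 * ‖u - v‖ ^ 2)
    (wstar : EuclideanSpace ℝ (Fin d))
    (hmin : ∀ x, F wstar ≤ F x)
    (w g : EuclideanSpace ℝ (Fin d)) (η : ℝ) (hη : 0 < η)
    {Ω : Type*} [MeasurableSpace Ω] (P : Measure Ω) [IsProbabilityMeasure P]
    (N : Ω → EuclideanSpace ℝ (Fin d)) (hmeas : Measurable N)
    (hNint : Integrable N P) (hNmean : ∫ ω, N ω ∂P = 0)
    (hN2 : Integrable (fun ω => ‖N ω‖ ^ 2) P) :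
    F w - F wstar
      ≤ (1 / (2 * η) - γ / 4) * ‖w - wstar‖ ^ 2
        - (1 / (2 * η)) * ∫ ω, ‖(w - η • g + N ω) - wstar‖ ^ 2 ∂P
        + (η + 1 / γ) * ‖F' w - g‖ ^ 2
        + η * ‖F' w‖ ^ 2
        + (1 / (2 * η)) * ∫ ω, ‖N ω‖ ^ 2 ∂P := by
  set u : EuclideanSpace ℝ (Fin d) := w - wstar with hu
  set e : EuclideanSpace ℝ (Fin d) := F' w - g with he
  set a : EuclideanSpace ℝ (Fin d) := w - η • g - wstar with ha
  -- Step 1: compute the integral of the squared distance.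
  have hpt : ∀ ω, ‖(w - η • g + N ω) - wstar‖ ^ 2
      = ‖a‖ ^ 2 + 2 * ⟪a, N ω⟫ + ‖N ω‖ ^ 2 := by
    intro ω
    have : (w - η • g + N ω) - wstar = a + N ω := by rw [ha]; abel
    rw [this, norm_add_sq_real]
  have hinner_int : Integrable (fun ω => ⟪a, N ω⟫) P := hNint.const_inner a
  have hInt1 : Integrable (fun ω => ‖a‖ ^ 2 + 2 * ⟪a, N ω⟫) P :=
    (integrable_const _).add (hinner_int.const_mul 2)
  have hint_eq : ∫ ω, ‖(w - η • g + N ω) - wstar‖ ^ 2 ∂P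
      = ‖a‖ ^ 2 + ∫ ω, ‖N ω‖ ^ 2 ∂P := by
    have h1 : ∫ ω, ‖(w - η • g + N ω) - wstar‖ ^ 2 ∂P
        = ∫ ω, (‖a‖ ^ 2 + 2 * ⟪a, N ω⟫ + ‖N ω‖ ^ 2) ∂P := by
      exact integral_congr_ae (Filter.Eventually.of_forall hpt)
    rw [h1, integral_add hInt1 hN2,
      integral_add (integrable_const (‖a‖ ^ 2)) (hinner_int.const_mul 2),
      integral_const, integral_const_mul, integral_inner hNint, hNmean]
    simp
  rw [hint_eq]
  -- Step 2: deterministic inequality.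
  -- strong convexity gives F w - F wstar ≤ ⟪F' w, u⟫ - γ/2 ‖u‖²
  have h1 : F w - F wstar ≤ ⟪F' w, u⟫ - γ / 2 * ‖u‖ ^ 2 := by
    have := hsc wstar w
    have hinner : ⟪F' w, wstar - w⟫ = -⟪F' w, u⟫ := by
      rw [show wstar - w = -(w - wstar) by abel, inner_neg_right]
    have hnorm : ‖wstar - w‖ = ‖u‖ := norm_sub_rev _ _
    rw [hinner, hnorm] at this
    linarith
  -- Young's inequality: ⟪e, u⟫ ≤ γ/4 ‖u‖² + 1/γ ‖e‖²
  have h2 : ⟪e, u⟫ ≤ γ / 4 * ‖u‖ ^ 2 + 1 / γ * ‖e‖ ^ 2 := by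
    have hexp : ‖γ • u - (2 : ℝ) • e‖ ^ 2
        = γ ^ 2 * ‖u‖ ^ 2 - 4 * γ * ⟪u, e⟫ + 4 * ‖e‖ ^ 2 := by
      rw [norm_sub_sq_real, real_inner_smul_left, real_inner_smul_right,
        norm_smul, norm_smul]
      simp only [Real.norm_eq_abs, abs_of_pos hγ, abs_two]
      ring
    have hnn : 0 ≤ ‖γ • u - (2 : ℝ) • e‖ ^ 2 := sq_nonneg _
    rw [hexp] at hnn
    have hcomm : ⟪e, u⟫ = ⟪u, e⟫ := real_inner_comm _ _
    rw [hcomm]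
    have hle : ⟪u, e⟫ ≤ (γ ^ 2 * ‖u‖ ^ 2 + 4 * ‖e‖ ^ 2) / (4 * γ) := by
      rw [le_div_iff₀ (by positivity)]
      nlinarith [hnn]
    have heq : (γ ^ 2 * ‖u‖ ^ 2 + 4 * ‖e‖ ^ 2) / (4 * γ)
        = γ / 4 * ‖u‖ ^ 2 + 1 / γ * ‖e‖ ^ 2 := by
      field_simp
    linarith [hle, heq.le]
  -- ‖g‖² ≤ 2‖F' w‖² + 2‖e‖²
  have h3 : ‖g‖ ^ 2 ≤ 2 * ‖F' w‖ ^ 2 + 2 * ‖e‖ ^ 2 := by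
    have hg : g = F' w - e := by rw [he]; abel
    have hcs : |⟪F' w, e⟫| ≤ ‖F' w‖ * ‖e‖ := abs_real_inner_le_norm _ _
    have := norm_sub_sq_real (F' w) e
    rw [hg]
    nlinarith [sq_nonneg (‖F' w‖ - ‖e‖), abs_le.mp hcs]
  -- expand ‖a‖²
  have h4 : ‖a‖ ^ 2 = ‖u‖ ^ 2 - 2 * η * ⟪u, g⟫ + η ^ 2 * ‖g‖ ^ 2 := by
    have : a = u - η • g := by rw [ha, hu]; abel
    rw [this, norm_sub_sq_real, real_inner_smul_right, norm_smul]
    simp only [Real.norm_eq_abs, abs_of_pos hη]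
    ring
  -- ⟪F' w, u⟫ = ⟪e, u⟫ + ⟪g, u⟫
  have h5 : ⟪F' w, u⟫ = ⟪e, u⟫ + ⟪g, u⟫ := by
    rw [he, inner_sub_left]; ring
  have h6 : ⟪g, u⟫ = ⟪u, g⟫ := real_inner_comm _ _
  rw [h4]
  set I := ∫ ω, ‖N ω‖ ^ 2 ∂P with hI
  have hA : 1 / (2 * η) * ((‖u‖ ^ 2 - 2 * η * ⟪u, g⟫ + η ^ 2 * ‖g‖ ^ 2) + I)
      = 1 / (2 * η) * ‖u‖ ^ 2 - ⟪u, g⟫ + η / 2 * ‖g‖ ^ 2 + 1 / (2 * η) * I := by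
    field_simp
  have hB : η / 2 * ‖g‖ ^ 2 ≤ η / 2 * (2 * ‖F' w‖ ^ 2 + 2 * ‖e‖ ^ 2) :=
    mul_le_mul_of_nonneg_left h3 (by positivity)
  have hB' : η / 2 * (2 * ‖F' w‖ ^ 2 + 2 * ‖e‖ ^ 2) = η * ‖F' w‖ ^ 2 + η * ‖e‖ ^ 2 := by
    ring
  have hC : (η + 1 / γ) * ‖e‖ ^ 2 = η * ‖e‖ ^ 2 + 1 / γ * ‖e‖ ^ 2 := by ring
  have hD : (1 / (2 * η) - γ / 4) * ‖u‖ ^ 2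
      = 1 / (2 * η) * ‖u‖ ^ 2 - γ / 4 * ‖u‖ ^ 2 := by ring
  have hE : γ / 2 * ‖u‖ ^ 2 = γ / 4 * ‖u‖ ^ 2 + γ / 4 * ‖u‖ ^ 2 := by ring
  linarith [h1, h2, h5, h6, hA, hB, hB', hC, hD, hE]
end
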